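/- arXiv:1609.06800 — 5 statements merged into one kernel-verified Lean document; each statement's English description precedes it below -/
import Mathlib

section
/- Let d, m, n be positive integers, let x : Fin m → ℝ^d and y : Fin n → ℝ^d be injective tuples of points (ordered configurations), and fix an index i with 1 ≤ i ≤ m. For r > 0 define the tuple w^r : Fin (m+n-1) → ℝ^d by w^r = (x_1, …, x_{i-1}, x_i + r·y_1, …, x_i + r·y_n, x_{i+1}, …, x_m). Then there exists r₀ > 0 such that for every r with 0 < r < r₀, the tuple w^r is injective, i.e. w^r is an ordered configuration of m+n-1 points in ℝ^d. -/
/-!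
Statement 0: Given ordered configurations `x : Fin m → ℝ^d` and `y : Fin n → ℝ^d`
(injective tuples) and an index `1 ≤ i ≤ m`, the tuple `w^r` obtained from `x` by
replacing `x_i` with `x_i + r•y_1, …, x_i + r•y_n` is injective for all sufficiently
small `r > 0`.

Indices of tuples are `Fin`-valued (0-based), while the distinguished index `i` is
1-based as in the paper: in 1-based terms, `w^r_a = x_a` for `a ≤ i-1`,
`w^r_a = x_i + r•y_{a-i+1}` for `i ≤ a ≤ i+n-1`, and `w^r_a = x_{a-n+1}` for `a ≥ i+n`.
-/

/-- The tuple `w^r` obtained from the configuration `x` by replacing the `i`-th point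
(1-based) with the `n` points `x_i + r•y_1, …, x_i + r•y_n`. -/
noncomputable def insertedTuple (d m n : ℕ) (x : Fin m → EuclideanSpace ℝ (Fin d))
    (y : Fin n → EuclideanSpace ℝ (Fin d)) (i : ℕ) (hi1 : 1 ≤ i) (hi2 : i ≤ m)
    (r : ℝ) : Fin (m + n - 1) → EuclideanSpace ℝ (Fin d) := fun a =>
  if h1 : a.val + 1 < i then x ⟨a.val, by omega⟩
  else if h2 : a.val + 1 < i + n then x ⟨i - 1, by omega⟩ + r • y ⟨a.val + 1 - i, by omega⟩
  else x ⟨a.val + 1 - n, by have := a.isLt; omega⟩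

theorem insertedTuple_injective_of_small (d m n : ℕ) (hd : 1 ≤ d) (hm : 1 ≤ m) (hn : 1 ≤ n)
    (x : Fin m → EuclideanSpace ℝ (Fin d)) (y : Fin n → EuclideanSpace ℝ (Fin d))
    (hx : Function.Injective x) (hy : Function.Injective y)
    (i : ℕ) (hi1 : 1 ≤ i) (hi2 : i ≤ m) :
    ∃ r₀ : ℝ, 0 < r₀ ∧ ∀ r : ℝ, 0 < r → r < r₀ →
      Function.Injective (insertedTuple d m n x y i hi1 hi2 r) := by
  obtain ⟨δ, hδ, hδx⟩ : ∃ δ > 0, ∀ a b : Fin m, a ≠ b → δ ≤ ‖x a - x b‖ := by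
    rcases le_or_gt m 1 with h | h
    · exact ⟨1, one_pos, fun a b hab => absurd (Fin.ext (by omega)) hab⟩
    · set s := (Finset.univ ×ˢ Finset.univ).filter
        (fun p : Fin m × Fin m => p.1 ≠ p.2) with hs_def
      have hs : s.Nonempty := by
        refine ⟨(⟨0, by omega⟩, ⟨1, by omega⟩), ?_⟩
        simp [hs_def, Fin.ext_iff]
      obtain ⟨p, hp, hmin⟩ := s.exists_min_image (fun p => ‖x p.1 - x p.2‖) hs
      refine ⟨‖x p.1 - x p.2‖, ?_, ?_⟩
      · rw [gt_iff_lt, norm_pos_iff, sub_ne_zero]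
        rw [hs_def, Finset.mem_filter] at hp
        exact hx.ne hp.2
      · intro a b hab
        exact hmin (a, b) (by
          rw [hs_def, Finset.mem_filter]
          exact ⟨Finset.mem_product.2 ⟨Finset.mem_univ _, Finset.mem_univ _⟩, hab⟩)
  obtain ⟨M, hM, hMy⟩ : ∃ M > 0, ∀ j : Fin n, ‖y j‖ ≤ M := by
    refine ⟨1 + Finset.univ.sup' ⟨⟨0, hn⟩, Finset.mem_univ _⟩ (fun j => ‖y j‖), ?_, ?_⟩
    · have := Finset.le_sup' (fun j => ‖y j‖) (Finset.mem_univ (⟨0, hn⟩ : Fin n))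
      have := norm_nonneg (y ⟨0, hn⟩)
      linarith
    · intro j
      have := Finset.le_sup' (fun j => ‖y j‖) (Finset.mem_univ j)
      linarith
  refine ⟨δ / M, div_pos hδ hM, fun r hr hrM => ?_⟩
  have hrsmall : ∀ j : Fin n, r * ‖y j‖ < δ := by
    intro j
    calc r * ‖y j‖ ≤ r * M := by nlinarith [hMy j, hr.le]
    _ < (δ / M) * M := by nlinarith
    _ = δ := by field_simp
  have key : ∀ (k : Fin m) (j : Fin n) (hk : k.val ≠ i - 1),
      x k ≠ x ⟨i - 1, by omega⟩ + r • y j := by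
    intro k j hk h
    have h1 := hδx k ⟨i - 1, by omega⟩ (by simp [Fin.ext_iff]; omega)
    have h2 : x k - x ⟨i - 1, by omega⟩ = r • y j := by rw [h]; abel
    rw [h2, norm_smul, Real.norm_eq_abs, abs_of_pos hr] at h1
    exact absurd (hrsmall j) (not_lt.2 h1)
  intro a b hab
  unfold insertedTuple at hab
  split_ifs at hab with h1a h1b h2b h2a h1b h2b h1b h2b
  · have := hx hab; simp only [Fin.ext_iff] at this ⊢; omega
  · exact absurd hab (key ⟨a.val, by omega⟩ ⟨b.val + 1 - i, by omega⟩ (by simp; omega))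
  · have := hx hab; simp only [Fin.ext_iff] at this ⊢; omega
  · exact absurd hab.symm (key ⟨b.val, by omega⟩ ⟨a.val + 1 - i, by omega⟩ (by simp; omega))
  · have h3 := add_left_cancel hab
    have h4 := smul_right_injective (EuclideanSpace ℝ (Fin d)) hr.ne' h3
    have := hy h4
    simp only [Fin.ext_iff] at this ⊢
    omega
  · exact absurd hab.symm (key ⟨b.val + 1 - n, by have := b.isLt; omega⟩ ⟨a.val + 1 - i, by omega⟩ (by simp; omega))
  · have := hx hab; simp only [Fin.ext_iff] at this ⊢; omega
  · exact absurd hab (key ⟨a.val + 1 - n, by have := a.isLt; omega⟩ ⟨b.val + 1 - i, by omega⟩ (by simp; omega))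
  · have := hx hab; simp only [Fin.ext_iff] at this ⊢; omega
end

section
/- Let d, m, n be positive integers, let x : Fin m → ℝ^d and y : Fin n → ℝ^d be injective, fix 1 ≤ i ≤ m, and let w^r be the tuple obtained from x by replacing x_i with x_i + r·y_1, …, x_i + r·y_n. Define the collapse map c : {1,…,m+n-1} → {1,…,m} by c(a) = a if a ≤ i-1, c(a) = i if i ≤ a ≤ i+n-1, and c(a) = a-n+1 if a ≥ i+n. Then for every pair of indices a < b in {1,…,m+n-1}, the direction vector (w^r_b − w^r_a)/‖w^r_b − w^r_a‖ tends, as r → 0 through positive values (i.e. in the filter of punctured right neighborhoods of 0), to the limit D_{a,b} given by: D_{a,b} = (y_{b-i+1} − y_{a-i+1})/‖y_{b-i+1} − y_{a-i+1}‖ if both a and b lie in the inserted block i ≤ a < b ≤ i+n-1, and D_{a,b} = (x_{c(b)} − x_{c(a)})/‖x_{c(b)} − x_{c(a)}‖ otherwise. (In particular the limit lim_{r→0⁺} θ(w^r) defining the operadic partial composition exists, and equals a point of the product of unit spheres ∏_{1≤a<b≤m+n-1} S^{d-1}.) -/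
/-!
Statement 1: convergence of the direction vectors of `w^r` as `r → 0⁺`.

Indices of tuples are `Fin`-valued (0-based); the distinguished index `i` and the
collapse map are formulated 1-based as in the paper (via `a.val + 1`).
-/

/-- Normalized direction vector `v/‖v‖`. -/
noncomputable def dir {d : ℕ} (v : EuclideanSpace ℝ (Fin d)) : EuclideanSpace ℝ (Fin d) :=
  ‖v‖⁻¹ • v

/-- The collapse map `c : {1,…,m+n-1} → {1,…,m}` (written 0-based on `Fin`):
`c(a) = a` for `a ≤ i-1`, `c(a) = i` for `i ≤ a ≤ i+n-1`, `c(a) = a-n+1` for `a ≥ i+n`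
(in 1-based terms). -/
def collapse (m n : ℕ) (i : ℕ) (hi1 : 1 ≤ i) (hi2 : i ≤ m)
    (a : Fin (m + n - 1)) : Fin m :=
  if h1 : a.val + 1 < i then ⟨a.val, by omega⟩
  else if h2 : a.val + 1 < i + n then ⟨i - 1, by omega⟩
  else ⟨a.val + 1 - n, by have := a.isLt; omega⟩

lemma norm_dir {d : ℕ} {v : EuclideanSpace ℝ (Fin d)} (hv : v ≠ 0) : ‖dir v‖ = 1 := by
  simp [dir, norm_smul, inv_mul_cancel₀ (norm_ne_zero_iff.mpr hv)]

lemma dir_smul_pos {d : ℕ} {r : ℝ} (hr : 0 < r) (v : EuclideanSpace ℝ (Fin d)) :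
    dir (r • v) = dir v := by
  unfold dir
  rw [norm_smul, Real.norm_eq_abs, abs_of_pos hr, mul_inv, smul_smul]
  congr 1
  rw [mul_comm r⁻¹, mul_assoc, inv_mul_cancel₀ hr.ne', mul_one]

lemma continuousAt_dir {d : ℕ} {v : EuclideanSpace ℝ (Fin d)} (hv : v ≠ 0) :
    ContinuousAt dir v := by
  have : ContinuousAt (fun w : EuclideanSpace ℝ (Fin d) => ‖w‖⁻¹ • w) v :=
    ((continuous_norm.continuousAt).inv₀ (norm_ne_zero_iff.mpr hv)).smul continuousAt_id
  exact this

lemma insertedTuple_eq (d m n : ℕ) (x : Fin m → EuclideanSpace ℝ (Fin d))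
    (y : Fin n → EuclideanSpace ℝ (Fin d)) (i : ℕ) (hi1 : 1 ≤ i) (hi2 : i ≤ m)
    (r : ℝ) (a : Fin (m + n - 1)) :
    insertedTuple d m n x y i hi1 hi2 r a =
      x (collapse m n i hi1 hi2 a) +
        r • (if h2 : i ≤ a.val + 1 ∧ a.val + 1 < i + n then y ⟨a.val + 1 - i, by omega⟩ else 0) := by
  unfold insertedTuple collapse
  by_cases h1 : a.val + 1 < i
  · rw [dif_pos h1, dif_pos h1, dif_neg (by omega)]; simp
  · by_cases h2 : a.val + 1 < i + n
    · rw [dif_neg h1, dif_pos h2, dif_neg h1, dif_pos h2, dif_pos (by omega)]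
    · rw [dif_neg h1, dif_neg h2, dif_neg h1, dif_neg h2, dif_neg (by omega)]; simp

theorem tendsto_dir_insertedTuple (d m n : ℕ) (hd : 1 ≤ d) (hm : 1 ≤ m) (hn : 1 ≤ n)
    (x : Fin m → EuclideanSpace ℝ (Fin d)) (y : Fin n → EuclideanSpace ℝ (Fin d))
    (hx : Function.Injective x) (hy : Function.Injective y)
    (i : ℕ) (hi1 : 1 ≤ i) (hi2 : i ≤ m)
    (a b : Fin (m + n - 1)) (hab : a.val < b.val) :
    ∀ D : EuclideanSpace ℝ (Fin d),
      D = (if h : i ≤ a.val + 1 ∧ b.val + 1 ≤ i + n - 1 then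
              dir (y ⟨b.val + 1 - i, by omega⟩ - y ⟨a.val + 1 - i, by omega⟩)
            else
              dir (x (collapse m n i hi1 hi2 b) - x (collapse m n i hi1 hi2 a))) →
      Filter.Tendsto
        (fun r : ℝ => dir (insertedTuple d m n x y i hi1 hi2 r b
            - insertedTuple d m n x y i hi1 hi2 r a))
        (nhdsWithin (0 : ℝ) (Set.Ioi 0)) (nhds D)
      ∧ ‖D‖ = 1 := by
  intro D hD
  by_cases h : i ≤ a.val + 1 ∧ b.val + 1 ≤ i + n - 1
  · rw [dif_pos h] at hD
    obtain ⟨h1, h2⟩ := h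
    have hyne : y ⟨b.val + 1 - i, by omega⟩ - y ⟨a.val + 1 - i, by omega⟩ ≠ 0 := by
      rw [sub_ne_zero]
      intro he
      have h3 := hy he
      rw [Fin.mk.injEq] at h3
      omega
    have key : ∀ r : ℝ, 0 < r →
        insertedTuple d m n x y i hi1 hi2 r b - insertedTuple d m n x y i hi1 hi2 r a =
          r • (y ⟨b.val + 1 - i, by omega⟩ - y ⟨a.val + 1 - i, by omega⟩) := by
      intro r hr
      rw [insertedTuple_eq, insertedTuple_eq, dif_pos ⟨by omega, by omega⟩,
        dif_pos ⟨by omega, by omega⟩]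
      have hca : collapse m n i hi1 hi2 a = collapse m n i hi1 hi2 b := by
        unfold collapse
        rw [dif_neg (by omega), dif_pos (by omega), dif_neg (by omega), dif_pos (by omega)]
      rw [hca, smul_sub]
      abel
    refine ⟨Filter.Tendsto.congr' ?_ tendsto_const_nhds, hD ▸ norm_dir hyne⟩
    filter_upwards [self_mem_nhdsWithin] with r hr
    rw [key r hr, dir_smul_pos hr, hD]
  · rw [dif_neg h] at hD
    have hcab : (collapse m n i hi1 hi2 a).val < (collapse m n i hi1 hi2 b).val := by
      unfold collapse
      split_ifs <;> simp <;> omega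
    have hxne : x (collapse m n i hi1 hi2 b) - x (collapse m n i hi1 hi2 a) ≠ 0 := by
      rw [sub_ne_zero]
      intro he
      exact absurd (hx he) (by intro hh; rw [hh] at hcab; omega)
    have hc : Continuous fun r : ℝ => insertedTuple d m n x y i hi1 hi2 r b
        - insertedTuple d m n x y i hi1 hi2 r a := by
      simp only [insertedTuple_eq]
      fun_prop
    have h0 : insertedTuple d m n x y i hi1 hi2 (0:ℝ) b
        - insertedTuple d m n x y i hi1 hi2 (0:ℝ) a
        = x (collapse m n i hi1 hi2 b) - x (collapse m n i hi1 hi2 a) := by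
      simp [insertedTuple_eq]
    have htend : Filter.Tendsto
        (fun r : ℝ => insertedTuple d m n x y i hi1 hi2 r b
            - insertedTuple d m n x y i hi1 hi2 r a)
        (nhdsWithin (0 : ℝ) (Set.Ioi 0))
        (nhds (x (collapse m n i hi1 hi2 b) - x (collapse m n i hi1 hi2 a))) := by
      have := hc.tendsto 0
      rw [h0] at this
      exact this.mono_left nhdsWithin_le_nhds
    refine ⟨hD ▸ ((continuousAt_dir hxne).tendsto.comp htend), hD ▸ norm_dir hxne⟩
end

section
/- Let d, m, n be positive integers and fix 1 ≤ i ≤ m. For x ∈ F_m(ℝ^d) and y ∈ F_n(ℝ^d), let D(x,y) ∈ ∏_{1≤a<b≤m+n-1} S^{d-1} denote the limit as r → 0⁺ of the tuple of direction vectors θ(w^r), where w^r is obtained from x by replacing x_i with x_i + r·y_1, …, x_i + r·y_n. Then D(x,y) depends only on θ(x) and θ(y): if x, x′ ∈ F_m(ℝ^d) satisfy θ(x) = θ(x′) and y, y′ ∈ F_n(ℝ^d) satisfy θ(y) = θ(y′), then D(x,y) = D(x′,y′). (This is the claim that the partial composition of configurations descends to a well-defined map ∘_i : S_d(m) × S_d(n)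 → S_d(m+n-1) on direction-vector data, where S_d(n) = ∏_{1≤i<j≤n} S^{d-1}.) -/
lemma tendsto_dir_add_smul {d : ℕ} (c v : EuclideanSpace ℝ (Fin d)) (hc : c ≠ 0) :
    Filter.Tendsto (fun r : ℝ => dir (c + r • v)) (nhdsWithin (0 : ℝ) (Set.Ioi 0))
      (nhds (dir c)) := by
  have h1 : Filter.Tendsto (fun r : ℝ => c + r • v) (nhds (0 : ℝ)) (nhds c) := by
    have hcont : Continuous fun r : ℝ => c + r • v :=
      continuous_const.add (continuous_id.smul continuous_const)
    simpa using hcont.tendsto 0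
  have h2 : ContinuousAt (fun w : EuclideanSpace ℝ (Fin d) => dir w) c := by
    unfold dir
    exact (continuousAt_id.norm.inv₀ (norm_ne_zero_iff.2 hc)).smul continuousAt_id
  exact h2.tendsto.comp (h1.mono_left nhdsWithin_le_nhds)

/-- Explicit value of the limit in each regime. -/
noncomputable def limitDir (d m n : ℕ) (x : Fin m → EuclideanSpace ℝ (Fin d))
    (y : Fin n → EuclideanSpace ℝ (Fin d)) (i : ℕ) (hi1 : 1 ≤ i) (hi2 : i ≤ m)
    (hn : 1 ≤ n) (a b : Fin (m + n - 1)) : EuclideanSpace ℝ (Fin d) :=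
  if ha1 : a.val + 1 < i then
    if hb1 : b.val + 1 < i then dir (x ⟨b.val, by omega⟩ - x ⟨a.val, by omega⟩)
    else if hb2 : b.val + 1 < i + n then dir (x ⟨i - 1, by omega⟩ - x ⟨a.val, by omega⟩)
    else dir (x ⟨b.val + 1 - n, by have := b.isLt; omega⟩ - x ⟨a.val, by omega⟩)
  else if ha2 : a.val + 1 < i + n then
    if hb2 : b.val + 1 < i + n then
      dir (y ⟨b.val + 1 - i, by omega⟩ - y ⟨a.val + 1 - i, by omega⟩)
    else dir (x ⟨b.val + 1 - n, by have := b.isLt; omega⟩ - x ⟨i - 1, by omega⟩)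
  else dir (x ⟨b.val + 1 - n, by have := b.isLt; omega⟩ -
    x ⟨a.val + 1 - n, by have := a.isLt; omega⟩)

lemma tendsto_insertedTuple_dir (d m n : ℕ) (hn : 1 ≤ n)
    (x : Fin m → EuclideanSpace ℝ (Fin d)) (y : Fin n → EuclideanSpace ℝ (Fin d))
    (i : ℕ) (hi1 : 1 ≤ i) (hi2 : i ≤ m)
    (hx : Function.Injective x) (hy : Function.Injective y)
    (a b : Fin (m + n - 1)) (hab : a.val < b.val) :
    Filter.Tendsto
      (fun r : ℝ => dir (insertedTuple d m n x y i hi1 hi2 r b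
          - insertedTuple d m n x y i hi1 hi2 r a))
      (nhdsWithin (0 : ℝ) (Set.Ioi 0))
      (nhds (limitDir d m n x y i hi1 hi2 hn a b)) := by
  by_cases ha1 : a.val + 1 < i
  · by_cases hb1 : b.val + 1 < i
    · simp only [insertedTuple, limitDir, dif_pos ha1, dif_pos hb1]
      exact tendsto_const_nhds
    · by_cases hb2 : b.val + 1 < i + n
      · simp only [insertedTuple, limitDir, dif_pos ha1, dif_neg hb1, dif_pos hb2]
        have hkey : ∀ r : ℝ,
            (x ⟨i - 1, by omega⟩ + r • y ⟨b.val + 1 - i, by omega⟩) - x ⟨a.val, by omega⟩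
            = (x ⟨i - 1, by omega⟩ - x ⟨a.val, by omega⟩) + r • y ⟨b.val + 1 - i, by omega⟩ :=
          fun r => by abel
        simp only [hkey]
        apply tendsto_dir_add_smul
        refine sub_ne_zero.2 fun h => ?_
        have := hx h
        simp only [Fin.mk.injEq] at this
        omega
      · simp only [insertedTuple, limitDir, dif_pos ha1, dif_neg hb1, dif_neg hb2]
        exact tendsto_const_nhds
  · have hb1 : ¬ (b.val + 1 < i) := by omega
    by_cases ha2 : a.val + 1 < i + n
    · by_cases hb2 : b.val + 1 < i + n
      · simp only [insertedTuple, limitDir, dif_neg ha1, dif_pos ha2, dif_neg hb1, dif_pos hb2]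
        have hkey : ∀ r : ℝ,
            (x ⟨i - 1, by omega⟩ + r • y ⟨b.val + 1 - i, by omega⟩)
              - (x ⟨i - 1, by omega⟩ + r • y ⟨a.val + 1 - i, by omega⟩)
            = r • (y ⟨b.val + 1 - i, by omega⟩ - y ⟨a.val + 1 - i, by omega⟩) := fun r => by
          rw [smul_sub]; abel
        refine Filter.Tendsto.congr' ?_ tendsto_const_nhds
        filter_upwards [self_mem_nhdsWithin] with r hr
        rw [hkey r, dir_smul_pos hr]
      · simp only [insertedTuple, limitDir, dif_neg ha1, dif_pos ha2, dif_neg hb1, dif_neg hb2]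
        have hkey : ∀ r : ℝ,
            x ⟨b.val + 1 - n, by have := b.isLt; omega⟩
              - (x ⟨i - 1, by omega⟩ + r • y ⟨a.val + 1 - i, by omega⟩)
            = (x ⟨b.val + 1 - n, by have := b.isLt; omega⟩ - x ⟨i - 1, by omega⟩)
              + r • (-y ⟨a.val + 1 - i, by omega⟩) := fun r => by
          rw [smul_neg]; abel
        simp only [hkey]
        apply tendsto_dir_add_smul
        refine sub_ne_zero.2 fun h => ?_
        have := hx h
        simp only [Fin.mk.injEq] at this
        omega
    · have hb2 : ¬ (b.val + 1 < i + n) := by omega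
      simp only [insertedTuple, limitDir, dif_neg ha1, dif_neg ha2, dif_neg hb1, dif_neg hb2]
      exact tendsto_const_nhds

lemma limitDir_congr (d m n : ℕ) (hn : 1 ≤ n)
    (x x' : Fin m → EuclideanSpace ℝ (Fin d)) (y y' : Fin n → EuclideanSpace ℝ (Fin d))
    (i : ℕ) (hi1 : 1 ≤ i) (hi2 : i ≤ m)
    (hθx : ∀ p q : Fin m, p < q → dir (x q - x p) = dir (x' q - x' p))
    (hθy : ∀ p q : Fin n, p < q → dir (y q - y p) = dir (y' q - y' p))
    (a b : Fin (m + n - 1)) (hab : a.val < b.val) :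
    limitDir d m n x y i hi1 hi2 hn a b = limitDir d m n x' y' i hi1 hi2 hn a b := by
  unfold limitDir
  by_cases ha1 : a.val + 1 < i
  · by_cases hb1 : b.val + 1 < i
    · simp only [dif_pos ha1, dif_pos hb1]
      exact hθx _ _ (Fin.mk_lt_mk.2 (by omega))
    · by_cases hb2 : b.val + 1 < i + n
      · simp only [dif_pos ha1, dif_neg hb1, dif_pos hb2]
        exact hθx _ _ (Fin.mk_lt_mk.2 (by omega))
      · simp only [dif_pos ha1, dif_neg hb1, dif_neg hb2]
        exact hθx _ _ (Fin.mk_lt_mk.2 (by omega))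
  · have hb1 : ¬ (b.val + 1 < i) := by omega
    by_cases ha2 : a.val + 1 < i + n
    · by_cases hb2 : b.val + 1 < i + n
      · simp only [dif_neg ha1, dif_pos ha2, dif_neg hb1, dif_pos hb2]
        exact hθy _ _ (Fin.mk_lt_mk.2 (by omega))
      · simp only [dif_neg ha1, dif_pos ha2, dif_neg hb1, dif_neg hb2]
        exact hθx _ _ (Fin.mk_lt_mk.2 (by omega))
    · have hb2 : ¬ (b.val + 1 < i + n) := by omega
      simp only [dif_neg ha1, dif_neg ha2, dif_neg hb1, dif_neg hb2]
      exact hθx _ _ (Fin.mk_lt_mk.2 (by omega))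

theorem limit_dir_depends_only_on_directions (d m n : ℕ) (hd : 1 ≤ d) (hm : 1 ≤ m)
    (hn : 1 ≤ n) (i : ℕ) (hi1 : 1 ≤ i) (hi2 : i ≤ m)
    (x x' : Fin m → EuclideanSpace ℝ (Fin d)) (y y' : Fin n → EuclideanSpace ℝ (Fin d))
    (hx : Function.Injective x) (hx' : Function.Injective x')
    (hy : Function.Injective y) (hy' : Function.Injective y')
    -- θ(x) = θ(x')
    (hθx : ∀ p q : Fin m, p < q → dir (x q - x p) = dir (x' q - x' p))
    -- θ(y) = θ(y')
    (hθy : ∀ p q : Fin n, p < q → dir (y q - y p) = dir (y' q - y' p))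
    (a b : Fin (m + n - 1)) (hab : a.val < b.val)
    (D D' : EuclideanSpace ℝ (Fin d))
    (hD : Filter.Tendsto
      (fun r : ℝ => dir (insertedTuple d m n x y i hi1 hi2 r b
          - insertedTuple d m n x y i hi1 hi2 r a))
      (nhdsWithin (0 : ℝ) (Set.Ioi 0)) (nhds D))
    (hD' : Filter.Tendsto
      (fun r : ℝ => dir (insertedTuple d m n x' y' i hi1 hi2 r b
          - insertedTuple d m n x' y' i hi1 hi2 r a))
      (nhdsWithin (0 : ℝ) (Set.Ioi 0)) (nhds D')) :
    D = D' := by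
  have h1 := tendsto_insertedTuple_dir d m n hn x y i hi1 hi2 hx hy a b hab
  have h2 := tendsto_insertedTuple_dir d m n hn x' y' i hi1 hi2 hx' hy' a b hab
  have e := limitDir_congr d m n hn x x' y y' i hi1 hi2 hθx hθy a b hab
  calc D = limitDir d m n x y i hi1 hi2 hn a b := tendsto_nhds_unique hD h1
    _ = limitDir d m n x' y' i hi1 hi2 hn a b := e
    _ = D' := tendsto_nhds_unique h2 hD'
end

section
/- Let O be a (non-symmetric) chain operad of ℚ-vector spaces, let k be an odd positive integer, and suppose given: a cycle ν ∈ O(2)_0 (dν = 0), a cycle g ∈ O(1)_k (dg = 0), an element h ∈ O(2)_{k+1} with dh = ν∘₂g + ν∘₁g − g∘₁ν, and an element ξ ∈ O(3)_1 with dξ = ν∘₂ν − ν∘₁ν. Define the obstruction element ω ∈ O(3)_{k+1} by ω = ω₁ − ω₂, where ω₁ = ν∘₂h − h∘₁ν + h∘₂ν − ν∘₁h and ω₂ = g∘₁ξ + ξ∘₁g + ξ∘₂g + ξ∘₃g. Then ω is a cycle: dω = 0. -/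
/-!
Statement 3: the obstruction element `ω = ω₁ - ω₂` is a cycle.

A (non-symmetric) chain operad of ℚ-vector spaces is encoded on the total space
`V = ⊕ₙ ⊕ₛ O(n)ₛ`: `piece n s` is the subspace `O(n)ₛ` of arity `n` and degree `s`,
`d` is the differential (degree `-1`, `d ∘ d = 0`), and `comp i` is the `i`-th partial
composition `∘ᵢ` (ℚ-bilinear, arity `(p,q) ↦ p+q-1`, degree `(s,t) ↦ s+t`), subject to
the Leibniz rule and the nested / disjoint associativity axioms with Koszul signs.
-/

structure ChainOperad (V : Type*) [AddCommGroup V] [Module ℚ V] where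
  /-- `piece n s` is the degree-`s` component `O(n)ₛ` of the arity-`n` part. -/
  piece : ℕ → ℤ → Submodule ℚ V
  /-- the differential -/
  d : V →ₗ[ℚ] V
  /-- `comp i a b = a ∘ᵢ b`, the `i`-th partial composition (ℚ-bilinear). -/
  comp : ℕ → V →ₗ[ℚ] V →ₗ[ℚ] V
  d_sq : ∀ v : V, d (d v) = 0
  d_mem : ∀ (n : ℕ) (s : ℤ) (v : V), v ∈ piece n s → d v ∈ piece n (s - 1)
  comp_mem : ∀ (p q i : ℕ) (s t : ℤ) (a b : V), 1 ≤ i → i ≤ p →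
    a ∈ piece p s → b ∈ piece q t → comp i a b ∈ piece (p + q - 1) (s + t)
  /-- Leibniz rule: `d(a ∘ᵢ b) = (da) ∘ᵢ b + (-1)^{|a|} a ∘ᵢ (db)`. -/
  leibniz : ∀ (p q i : ℕ) (s t : ℤ) (a b : V), 1 ≤ i → i ≤ p →
    a ∈ piece p s → b ∈ piece q t →
    d (comp i a b) = comp i (d a) b + ((Int.negOnePow s : ℤˣ) : ℤ) • comp i a (d b)
  /-- Nested associativity: `(a ∘ᵢ b) ∘ⱼ c = a ∘ᵢ (b ∘_{j-i+1} c)` for `i ≤ j ≤ i+q-1`. -/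
  assoc_nested : ∀ (p q r i j : ℕ) (s t u : ℤ) (a b c : V), 1 ≤ i → i ≤ p →
    i ≤ j → j ≤ i + q - 1 →
    a ∈ piece p s → b ∈ piece q t → c ∈ piece r u →
    comp j (comp i a b) c = comp i a (comp (j - i + 1) b c)
  /-- Disjoint associativity, `j < i`:
  `(a ∘ᵢ b) ∘ⱼ c = (-1)^{|b||c|} (a ∘ⱼ c) ∘_{i+r-1} b`. -/
  assoc_disjoint_lt : ∀ (p q r i j : ℕ) (s t u : ℤ) (a b c : V), 1 ≤ i → i ≤ p →
    1 ≤ j → j < i →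
    a ∈ piece p s → b ∈ piece q t → c ∈ piece r u →
    comp j (comp i a b) c
      = ((Int.negOnePow (t * u) : ℤˣ) : ℤ) • comp (i + r - 1) (comp j a c) b
  /-- Disjoint associativity, `j ≥ i+q`:
  `(a ∘ᵢ b) ∘ⱼ c = (-1)^{|b||c|} (a ∘_{j-q+1} c) ∘ᵢ b`. -/
  assoc_disjoint_ge : ∀ (p q r i j : ℕ) (s t u : ℤ) (a b c : V), 1 ≤ i → i ≤ p →
    i + q ≤ j → j ≤ p + q - 1 →
    a ∈ piece p s → b ∈ piece q t → c ∈ piece r u →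
    comp j (comp i a b) c
      = ((Int.negOnePow (t * u) : ℤˣ) : ℤ) • comp i (comp (j - q + 1) a c) b

theorem obstruction_is_cycle {V : Type*} [AddCommGroup V] [Module ℚ V]
    (O : ChainOperad V) (k : ℤ) (hk_odd : Odd k) (hk_pos : 0 < k)
    (ν g h ξ : V)
    (hν : ν ∈ O.piece 2 0) (hdν : O.d ν = 0)
    (hg : g ∈ O.piece 1 k) (hdg : O.d g = 0)
    (hh : h ∈ O.piece 2 (k + 1))
    (hdh : O.d h = O.comp 2 ν g + O.comp 1 ν g - O.comp 1 g ν)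
    (hξ : ξ ∈ O.piece 3 1)
    (hdξ : O.d ξ = O.comp 2 ν ν - O.comp 1 ν ν) :
    O.d ((O.comp 2 ν h - O.comp 1 h ν + O.comp 2 h ν - O.comp 1 ν h)
        - (O.comp 1 g ξ + O.comp 1 ξ g + O.comp 2 ξ g + O.comp 3 ξ g)) = 0 := by
  -- memberships of the basic composites
  have mem_ν2g : O.comp 2 ν g ∈ O.piece 2 k := by
    simpa using O.comp_mem 2 1 2 0 k ν g (by norm_num) (by norm_num) hν hg
  have mem_ν1g : O.comp 1 ν g ∈ O.piece 2 k := by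
    simpa using O.comp_mem 2 1 1 0 k ν g (by norm_num) (by norm_num) hν hg
  have mem_g1ν : O.comp 1 g ν ∈ O.piece 2 k := by
    simpa using O.comp_mem 1 2 1 k 0 g ν (by norm_num) (by norm_num) hg hν
  have mem_ν1ν : O.comp 1 ν ν ∈ O.piece 3 0 := by
    simpa using O.comp_mem 2 2 1 0 0 ν ν (by norm_num) (by norm_num) hν hν
  have mem_ν2ν : O.comp 2 ν ν ∈ O.piece 3 0 := by
    simpa using O.comp_mem 2 2 2 0 0 ν ν (by norm_num) (by norm_num) hν hν
  -- Leibniz computations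
  have L1 : O.d (O.comp 2 ν h) = O.comp 2 ν (O.d h) := by
    rw [O.leibniz 2 2 2 0 (k+1) ν h (by norm_num) (by norm_num) hν hh, hdν]
    simp
  have L2 : O.d (O.comp 1 h ν) = O.comp 1 (O.d h) ν := by
    rw [O.leibniz 2 2 1 (k+1) 0 h ν (by norm_num) (by norm_num) hh hν, hdν]
    simp
  have L3 : O.d (O.comp 2 h ν) = O.comp 2 (O.d h) ν := by
    rw [O.leibniz 2 2 2 (k+1) 0 h ν (by norm_num) (by norm_num) hh hν, hdν]
    simp
  have L4 : O.d (O.comp 1 ν h) = O.comp 1 ν (O.d h) := by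
    rw [O.leibniz 2 2 1 0 (k+1) ν h (by norm_num) (by norm_num) hν hh, hdν]
    simp
  have L5 : O.d (O.comp 1 g ξ) = - O.comp 1 g (O.d ξ) := by
    rw [O.leibniz 1 3 1 k 1 g ξ (by norm_num) (by norm_num) hg hξ, hdg,
      Int.negOnePow_odd _ hk_odd]
    simp
  have L6 : O.d (O.comp 1 ξ g) = O.comp 1 (O.d ξ) g := by
    rw [O.leibniz 3 1 1 1 k ξ g (by norm_num) (by norm_num) hξ hg, hdg]
    simp
  have L7 : O.d (O.comp 2 ξ g) = O.comp 2 (O.d ξ) g := by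
    rw [O.leibniz 3 1 2 1 k ξ g (by norm_num) (by norm_num) hξ hg, hdg]
    simp
  have L8 : O.d (O.comp 3 ξ g) = O.comp 3 (O.d ξ) g := by
    rw [O.leibniz 3 1 3 1 k ξ g (by norm_num) (by norm_num) hξ hg, hdg]
    simp
  -- associativity identities
  have e1 : O.comp 3 (O.comp 2 ν ν) g = O.comp 2 ν (O.comp 2 ν g) := by
    simpa using O.assoc_nested 2 2 1 2 3 0 0 k ν ν g (by norm_num) (by norm_num)
      (by norm_num) (by norm_num) hν hν hg
  have e2 : O.comp 2 (O.comp 2 ν ν) g = O.comp 2 ν (O.comp 1 ν g) := by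
    simpa using O.assoc_nested 2 2 1 2 2 0 0 k ν ν g (by norm_num) (by norm_num)
      (by norm_num) (by norm_num) hν hν hg
  have e3 : O.comp 2 (O.comp 2 ν g) ν = O.comp 2 ν (O.comp 1 g ν) := by
    simpa using O.assoc_nested 2 1 2 2 2 0 k 0 ν g ν (by norm_num) (by norm_num)
      (by norm_num) (by norm_num) hν hg hν
  have e4 : O.comp 1 (O.comp 2 ν g) ν = O.comp 3 (O.comp 1 ν ν) g := by
    have := O.assoc_disjoint_lt 2 1 2 2 1 0 k 0 ν g ν (by norm_num) (by norm_num)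
      (by norm_num) (by norm_num) hν hg hν
    simpa using this
  have e5 : O.comp 1 (O.comp 1 ν g) ν = O.comp 1 ν (O.comp 1 g ν) := by
    simpa using O.assoc_nested 2 1 2 1 1 0 k 0 ν g ν (by norm_num) (by norm_num)
      (by norm_num) (by norm_num) hν hg hν
  have e6 : O.comp 1 (O.comp 1 g ν) ν = O.comp 1 g (O.comp 1 ν ν) := by
    simpa using O.assoc_nested 1 2 2 1 1 k 0 0 g ν ν (by norm_num) (by norm_num)
      (by norm_num) (by norm_num) hg hν hν
  have e8 : O.comp 2 (O.comp 1 ν g) ν = O.comp 1 (O.comp 2 ν ν) g := by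
    have := O.assoc_disjoint_ge 2 1 2 1 2 0 k 0 ν g ν (by norm_num) (by norm_num)
      (by norm_num) (by norm_num) hν hg hν
    simpa using this
  have e9 : O.comp 2 (O.comp 1 g ν) ν = O.comp 1 g (O.comp 2 ν ν) := by
    simpa using O.assoc_nested 1 2 2 1 2 k 0 0 g ν ν (by norm_num) (by norm_num)
      (by norm_num) (by norm_num) hg hν hν
  have e10 : O.comp 2 (O.comp 1 ν ν) g = O.comp 1 ν (O.comp 2 ν g) := by
    simpa using O.assoc_nested 2 2 1 1 2 0 0 k ν ν g (by norm_num) (by norm_num)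
      (by norm_num) (by norm_num) hν hν hg
  have e11 : O.comp 1 (O.comp 1 ν ν) g = O.comp 1 ν (O.comp 1 ν g) := by
    simpa using O.assoc_nested 2 2 1 1 1 0 0 k ν ν g (by norm_num) (by norm_num)
      (by norm_num) (by norm_num) hν hν hg
  simp only [map_sub, map_add, L1, L2, L3, L4, L5, L6, L7, L8, hdh, hdξ,
    LinearMap.add_apply, LinearMap.sub_apply, map_sub, map_add]
  simp only [e2, e3, e4, e5, e6, e8, e9, e10, e11, e1]
  abel
end

section
/- Let O be a (non-symmetric) chain operad of ℚ-vector spaces, let k be an odd positive integer, let ν ∈ O(2)_0 and g ∈ O(1)_k be cycles, and assume every cycle of degree 1 in O(3) is a boundary (H₁(O(3)) = 0). Suppose (h′, ξ′) and (h″, ξ″) are two pairs with h′, h″ ∈ O(2)_{k+1} satisfying dh′ = dh″ = ν∘₂g + ν∘₁g − g∘₁ν and ξ′, ξ″ ∈ O(3)_1 satisfying dξ′ = dξ″ = ν∘₂ν − ν∘₁ν, and let ω′ and ω″ be the corresponding obstruction cycles, ω = (ν∘₂h − h∘₁ν + h∘₂ν − ν∘₁h) − (g∘₁ξ + ξ∘₁g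 + ξ∘₂g + ξ∘₃g). Then the obstruction class is independent of the choices: there exist a cycle z ∈ O(2)_{k+1} (dz = 0) and an element η ∈ O(3)_{k+2} such that ω′ − ω″ = (ν∘₂z − z∘₁ν + z∘₂ν − ν∘₁z) + dη; equivalently, ω′ and ω″ represent the same element of the quotient H_{k+1}(O(3)) / δ_ν H_{k+1}(O(2)), where δ_ν is induced by x ↦ ν∘₂x − x∘₁ν + x∘₂ν − ν∘₁x. -/
theorem obstruction_class_well_defined {V : Type*} [AddCommGroup V] [Module ℚ V]
    (O : ChainOperad V) (k : ℤ) (hk_odd : Odd k) (hk_pos : 0 < k)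
    (ν g : V)
    (hν : ν ∈ O.piece 2 0) (hdν : O.d ν = 0)
    (hg : g ∈ O.piece 1 k) (hdg : O.d g = 0)
    -- H₁(O(3)) = 0 : every cycle of degree 1 in O(3) is a boundary
    (hH1 : ∀ v ∈ O.piece 3 1, O.d v = 0 → ∃ u ∈ O.piece 3 2, O.d u = v)
    (h' h'' ξ' ξ'' : V)
    (hh' : h' ∈ O.piece 2 (k + 1)) (hh'' : h'' ∈ O.piece 2 (k + 1))
    (hdh' : O.d h' = O.comp 2 ν g + O.comp 1 ν g - O.comp 1 g ν)
    (hdh'' : O.d h'' = O.comp 2 ν g + O.comp 1 ν g - O.comp 1 g ν)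
    (hξ' : ξ' ∈ O.piece 3 1) (hξ'' : ξ'' ∈ O.piece 3 1)
    (hdξ' : O.d ξ' = O.comp 2 ν ν - O.comp 1 ν ν)
    (hdξ'' : O.d ξ'' = O.comp 2 ν ν - O.comp 1 ν ν) :
    ∃ z ∈ O.piece 2 (k + 1), O.d z = 0 ∧ ∃ η ∈ O.piece 3 (k + 2),
      ((O.comp 2 ν h' - O.comp 1 h' ν + O.comp 2 h' ν - O.comp 1 ν h')
          - (O.comp 1 g ξ' + O.comp 1 ξ' g + O.comp 2 ξ' g + O.comp 3 ξ' g))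
        - ((O.comp 2 ν h'' - O.comp 1 h'' ν + O.comp 2 h'' ν - O.comp 1 ν h'')
          - (O.comp 1 g ξ'' + O.comp 1 ξ'' g + O.comp 2 ξ'' g + O.comp 3 ξ'' g))
      = (O.comp 2 ν z - O.comp 1 z ν + O.comp 2 z ν - O.comp 1 ν z) + O.d η := by
  obtain ⟨u, hu, hdu⟩ := hH1 (ξ' - ξ'') (sub_mem hξ' hξ'')
    (by rw [map_sub, hdξ', hdξ'']; abel)
  refine ⟨h' - h'', sub_mem hh' hh'', by rw [map_sub, hdh', hdh'']; abel,
    O.comp 1 g u - O.comp 1 u g - O.comp 2 u g - O.comp 3 u g, ?_, ?_⟩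
  · refine sub_mem (sub_mem (sub_mem ?_ ?_) ?_) ?_
    · exact O.comp_mem 1 3 1 k 2 g u le_rfl le_rfl hg hu
    · have := O.comp_mem 3 1 1 2 k u g le_rfl (by norm_num) hu hg
      rwa [show (2 : ℤ) + k = k + 2 by ring] at this
    · have := O.comp_mem 3 1 2 2 k u g (by norm_num) (by norm_num) hu hg
      rwa [show (2 : ℤ) + k = k + 2 by ring] at this
    · have := O.comp_mem 3 1 3 2 k u g (by norm_num) (by norm_num) hu hg
      rwa [show (2 : ℤ) + k = k + 2 by ring] at this
  · have l1 : O.d (O.comp 1 g u) = - O.comp 1 g (ξ' - ξ'') := by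
      rw [O.leibniz 1 3 1 k 2 g u le_rfl le_rfl hg hu, hdg, hdu,
        Int.negOnePow_odd k hk_odd]
      simp
    have l2 : ∀ i, 1 ≤ i → i ≤ 3 → O.d (O.comp i u g) = O.comp i (ξ' - ξ'') g := by
      intro i h1 h3
      rw [O.leibniz 3 1 i 2 k u g h1 h3 hu hg, hdg, hdu]
      simp
    rw [show O.d (O.comp 1 g u - O.comp 1 u g - O.comp 2 u g - O.comp 3 u g)
        = O.d (O.comp 1 g u) - O.d (O.comp 1 u g) - O.d (O.comp 2 u g) - O.d (O.comp 3 u g) by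
      simp [map_sub], l1, l2 1 le_rfl (by norm_num),
      l2 2 (by norm_num) (by norm_num), l2 3 (by norm_num) (by norm_num)]
    simp only [map_sub, LinearMap.sub_apply]
    abel
end
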